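/- Under the assumptions of the previous proposition, if x is deterministic (its distribution is a point mass at a fixed image x₀), then the δ-minimizers R^{ε,δ} of the MSE and R̂^{ε,δ} of the surrogate loss over R_ε satisfy E[‖R^{ε,δ}(ŷ) − R̂^{ε,δ}(ŷ)‖²] ≤ (ε² + 2√δ)/(1 − √δ). -/

import Mathlib

open MeasureTheory ProbabilityTheory

/-!
Since `x = x₀` almost surely, the constant denoiser `x₀` lies in `R_ε` and has zero MSE, so the MSE
δ-minimiser `Rm` is within `δ` of `x` in mean square. The surrogate target is
`y - α⁻¹ z = x + w` with `w = n - α⁻¹ z`; conditional independence kills the cross moments of `n`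
and `z`, and the matched covariances cancel the rest, so `w` has mean zero and is uncorrelated with
`nhat = n + α z`, i.e. `w` is `L²`-orthogonal to every partially linear part `c + L nhat`.
Replacing `Rh` by the denoiser that keeps only its residual and comparing surrogate losses then
gives, by Pythagoras, that `Rh` is within `ε ^ 2 + δ` of `x` in mean square. Minkowski's
inequality in `L²` bounds the mean-square distance of `Rm` and `Rh` by
`(√δ + √(ε ^ 2 + δ)) ^ 2 ≤ (ε ^ 2 + 2 √δ) / (1 - √δ)`.
-/

/-- The set of partially linear denoisers with residual variance at most `ε ^ 2`. -/
def PartiallyLinearDenoisers {Ω : Type*} [MeasurableSpace Ω] (μ : Measure Ω)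
    {m : ℕ} (x nhat : Ω → EuclideanSpace ℝ (Fin m)) (ε : ℝ) :
    Set (EuclideanSpace ℝ (Fin m) → EuclideanSpace ℝ (Fin m)) :=
  {R | Measurable R ∧
    ∃ (g : EuclideanSpace ℝ (Fin m) → EuclideanSpace ℝ (Fin m))
      (L : EuclideanSpace ℝ (Fin m) → EuclideanSpace ℝ (Fin m) →L[ℝ] EuclideanSpace ℝ (Fin m))
      (e : Ω → EuclideanSpace ℝ (Fin m)),
        Measurable g ∧ MemLp e 2 μ ∧
        (∀ᵐ ω ∂μ, R (x ω + nhat ω) = g (x ω) + L (x ω) (nhat ω) + e ω) ∧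
        ∫ ω, ‖e ω‖ ^ 2 ∂μ ≤ ε ^ 2}

open scoped InnerProductSpace

section L2

variable {Ω E : Type*} {mΩ : MeasurableSpace Ω} {μ : Measure Ω}
  [NormedAddCommGroup E] [InnerProductSpace ℝ E] {f g w : Ω → E}

lemma MeasureTheory.MemLp.integral_inner_eq_inner_toLp (hf : MemLp f 2 μ)
    (hg : MemLp g 2 μ) :
    ∫ ω, ⟪f ω, g ω⟫_ℝ ∂μ = ⟪hf.toLp f, hg.toLp g⟫_ℝ := by
  rw [L2.inner_def]
  refine integral_congr_ae ?_
  filter_upwards [hf.coeFn_toLp, hg.coeFn_toLp] with ω hfa hga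
  rw [hfa, hga]

lemma MeasureTheory.MemLp.integrable_inner (hf : MemLp f 2 μ) (hg : MemLp g 2 μ) :
    Integrable (fun ω => ⟪f ω, g ω⟫_ℝ) μ :=
  (L2.integrable_inner (hf.toLp f) (hg.toLp g)).congr <| by
    filter_upwards [hf.coeFn_toLp, hg.coeFn_toLp] with ω hfa hga
    rw [hfa, hga]

lemma MeasureTheory.MemLp.integral_norm_sq_eq_norm_toLp_sq (hf : MemLp f 2 μ) :
    ∫ ω, ‖f ω‖ ^ 2 ∂μ = ‖hf.toLp f‖ ^ 2 := by
  simp_rw [← real_inner_self_eq_norm_sq]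
  exact hf.integral_inner_eq_inner_toLp hf

lemma MeasureTheory.MemLp.integral_norm_sub_sq_eq_norm_toLp_sub_sq (hf : MemLp f 2 μ)
    (hg : MemLp g 2 μ) : ∫ ω, ‖f ω - g ω‖ ^ 2 ∂μ = ‖hf.toLp f - hg.toLp g‖ ^ 2 := by
  rw [← MemLp.toLp_sub hf hg]
  exact (hf.sub hg).integral_norm_sq_eq_norm_toLp_sq

lemma integral_norm_sq_le_of_integral_norm_sub_sq_le {δ : ℝ} (hf : MemLp f 2 μ)
    (hg : MemLp g 2 μ) (hw : MemLp w 2 μ) (horth : ∫ ω, ⟪f ω - g ω, w ω⟫_ℝ ∂μ = 0)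
    (h : ∫ ω, ‖f ω - w ω‖ ^ 2 ∂μ ≤ ∫ ω, ‖g ω - w ω‖ ^ 2 ∂μ + δ) :
    ∫ ω, ‖f ω‖ ^ 2 ∂μ ≤ ∫ ω, ‖g ω‖ ^ 2 ∂μ + δ := by
  have horth' : ⟪hf.toLp f - hg.toLp g, hw.toLp w⟫_ℝ = 0 := by
    rw [← MemLp.toLp_sub hf hg, ← (hf.sub hg).integral_inner_eq_inner_toLp hw]
    exact horth
  rw [hf.integral_norm_sub_sq_eq_norm_toLp_sub_sq hw,
    hg.integral_norm_sub_sq_eq_norm_toLp_sub_sq hw, norm_sub_sq_real, norm_sub_sq_real] at h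
  rw [inner_sub_left] at horth'
  rw [hf.integral_norm_sq_eq_norm_toLp_sq, hg.integral_norm_sq_eq_norm_toLp_sq]
  linarith

lemma integral_norm_sub_sq_le_sq_sqrt_add_sqrt {A B : ℝ} (hf : MemLp f 2 μ) (hg : MemLp g 2 μ)
    (hA : ∫ ω, ‖f ω‖ ^ 2 ∂μ ≤ A) (hB : ∫ ω, ‖g ω‖ ^ 2 ∂μ ≤ B) :
    ∫ ω, ‖f ω - g ω‖ ^ 2 ∂μ ≤ (√A + √B) ^ 2 := by
  rw [hf.integral_norm_sq_eq_norm_toLp_sq] at hA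
  rw [hg.integral_norm_sq_eq_norm_toLp_sq] at hB
  rw [hf.integral_norm_sub_sq_eq_norm_toLp_sub_sq hg]
  gcongr
  exact (norm_sub_le _ _).trans
    (add_le_add (Real.le_sqrt_of_sq_le hA) (Real.le_sqrt_of_sq_le hB))

lemma MeasureTheory.MemLp.euclideanSpace_apply {ι : Type*} [Fintype ι]
    {v : Ω → EuclideanSpace ℝ ι} {p : ENNReal} (hv : MemLp v p μ) (i : ι) :
    MemLp (fun ω => v ω i) p μ :=
  (EuclideanSpace.proj (𝕜 := ℝ) i).comp_memLp' hv

lemma EuclideanSpace.inner_clm_apply {ι : Type*} [Fintype ι] [DecidableEq ι]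
    (T : EuclideanSpace ℝ ι →L[ℝ] EuclideanSpace ℝ ι) (u v : EuclideanSpace ℝ ι) :
    ⟪T u, v⟫_ℝ = ∑ j, ∑ i, T (EuclideanSpace.single j 1) i * (u j * v i) := by
  conv_lhs => rw [← (EuclideanSpace.basisFun ι ℝ).sum_repr u]
  simp only [map_sum, map_smul, sum_inner, EuclideanSpace.basisFun_apply,
    EuclideanSpace.basisFun_repr, PiLp.inner_apply, RCLike.inner_apply, conj_trivial,
    PiLp.smul_apply, smul_eq_mul]
  exact Finset.sum_congr rfl fun j _ => Finset.sum_congr rfl fun i _ => by ring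

lemma integral_inner_clm_apply_eq_zero {ι : Type*} [Fintype ι] {u v : Ω → EuclideanSpace ℝ ι}
    (hu : MemLp u 2 μ) (hv : MemLp v 2 μ) (huv : ∀ i j, ∫ ω, u ω i * v ω j ∂μ = 0)
    (T : EuclideanSpace ℝ ι →L[ℝ] EuclideanSpace ℝ ι) :
    ∫ ω, ⟪T (u ω), v ω⟫_ℝ ∂μ = 0 := by
  classical
  have hint : ∀ i j, Integrable (fun ω => u ω i * v ω j) μ := fun i j =>
    (hu.euclideanSpace_apply i).integrable_mul (hv.euclideanSpace_apply j)
  simp_rw [EuclideanSpace.inner_clm_apply]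
  rw [integral_finsetSum _ fun j _ => integrable_finsetSum _ fun i _ => (hint j i).const_mul _]
  refine Finset.sum_eq_zero fun j _ => ?_
  rw [integral_finsetSum _ fun i _ => (hint j i).const_mul _]
  exact Finset.sum_eq_zero fun i _ => by rw [integral_const_mul, huv, mul_zero]

lemma integral_add_mul_mul_sub_inv_mul_eq_zero {a b c d : Ω → ℝ} (ha : MemLp a 2 μ)
    (hb : MemLp b 2 μ) (hc : MemLp c 2 μ) (hd : MemLp d 2 μ) {r : ℝ} (hr : r ≠ 0)
    (hab : ∫ ω, a ω * b ω ∂μ = ∫ ω, c ω * d ω ∂μ) (had : ∫ ω, a ω * d ω ∂μ = 0)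
    (hcb : ∫ ω, c ω * b ω ∂μ = 0) :
    ∫ ω, (a ω + r * c ω) * (b ω - r⁻¹ * d ω) ∂μ = 0 := by
  have hexpand : ∀ ω, (a ω + r * c ω) * (b ω - r⁻¹ * d ω)
      = (a ω * b ω - c ω * d ω) + r * (c ω * b ω) - r⁻¹ * (a ω * d ω) := fun ω => by
    field_simp
    ring
  have hab' : Integrable (fun ω => a ω * b ω) μ := ha.integrable_mul hb
  have hcd' : Integrable (fun ω => c ω * d ω) μ := hc.integrable_mul hd
  have hcb' : Integrable (fun ω => c ω * b ω) μ := hc.integrable_mul hb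
  have had' : Integrable (fun ω => a ω * d ω) μ := ha.integrable_mul hd
  simp_rw [hexpand]
  rw [integral_sub, integral_add, integral_sub, integral_const_mul, integral_const_mul, hab, hcb,
    had]
  · ring
  all_goals fun_prop

end L2

lemma sq_sqrt_add_sqrt_add_le {ε δ : ℝ} (hδ : δ ∈ Set.Ioo (0 : ℝ) 1) :
    (√δ + √(ε ^ 2 + δ)) ^ 2 ≤ (ε ^ 2 + 2 * √δ) / (1 - √δ) := by
  obtain ⟨hδ0, hδ1⟩ := hδ
  set s := √δ
  have hs0 : 0 ≤ s := Real.sqrt_nonneg δ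
  have hs1 : s < 1 := (Real.sqrt_lt' one_pos).2 (by simpa using hδ1)
  have hδs : δ = s ^ 2 := (Real.sq_sqrt hδ0.le).symm
  have hr : √(ε ^ 2 + δ) ≤ |ε| + s := by
    rw [Real.sqrt_le_left (by positivity), hδs, add_sq, sq_abs]
    nlinarith [abs_nonneg ε]
  have hr2 : √(ε ^ 2 + δ) ^ 2 = ε ^ 2 + s ^ 2 := by
    rw [Real.sq_sqrt (by positivity), hδs]
  rw [le_div_iff₀ (by linarith)]
  nlinarith [mul_le_mul_of_nonneg_left hr hs0, mul_nonneg hs0 (sq_nonneg (|ε| + s - 1)),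
    mul_nonneg hs0 (sq_nonneg s), abs_nonneg ε, sq_abs ε, mul_nonneg hs0 (sq_nonneg (1 - s))]

section CondIndep

variable {Ω : Type*} {m mΩ : MeasurableSpace Ω} [StandardBorelSpace Ω] {μ : Measure Ω}
  [IsFiniteMeasure μ] {hm : m ≤ mΩ} {f g : Ω → ℝ}

/-- Independence of real random variables is tested on the countable π-system of rational
half-lines, so the kernel-wise statements can be collected into a single null set. -/
lemma ProbabilityTheory.CondIndepFun.ae_indepFun_condExpKernel (hf : Measurable f)
    (hg : Measurable g) (hfg : CondIndepFun m hm f g μ) :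
    ∀ᵐ ω ∂μ, IndepFun f g (condExpKernel μ m ω) := by
  let S : Set (Set ℝ) := ⋃ q : ℚ, {Set.Iio (q : ℝ)}
  have hS : IsPiSystem S := Real.isPiSystem_Iio_rat
  have hgen : ∀ h : Ω → ℝ, MeasurableSpace.comap h inferInstance
      = MeasurableSpace.generateFrom {s | ∃ t ∈ S, h ⁻¹' t = s} := fun h => by
    rw [show (inferInstance : MeasurableSpace ℝ) = borel ℝ from rfl,
      Real.borel_eq_generateFrom_Iio_rat, MeasurableSpace.comap_generateFrom]
    rfl
  have hae : ∀ᵐ ω ∂μ, ∀ q r : ℚ,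
      condExpKernel μ m ω (f ⁻¹' Set.Iio (q : ℝ) ∩ g ⁻¹' Set.Iio (r : ℝ))
        = condExpKernel μ m ω (f ⁻¹' Set.Iio (q : ℝ))
          * condExpKernel μ m ω (g ⁻¹' Set.Iio (r : ℝ)) := by
    simp only [ae_all_iff]
    exact fun q r => ae_of_ae_trim hm <| hfg _ _
      ⟨_, measurableSet_Iio, rfl⟩ ⟨_, measurableSet_Iio, rfl⟩
  filter_upwards [hae] with ω hω
  refine IndepSets.indep hf.comap_le hg.comap_le (hS.comap f) (hS.comap g) (hgen f) (hgen g) ?_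
  rintro _ _ ⟨_, hs, rfl⟩ ⟨_, ht, rfl⟩
  simp only [S, Set.mem_iUnion, Set.mem_singleton_iff] at hs ht
  obtain ⟨q, rfl⟩ := hs
  obtain ⟨r, rfl⟩ := ht
  exact Filter.Eventually.of_forall fun _ => hω q r

lemma ProbabilityTheory.CondIndepFun.integral_mul_eq_zero (hf : Measurable f) (hg : Measurable g)
    (hf2 : MemLp f 2 μ) (hg2 : MemLp g 2 μ) (hfg : CondIndepFun m hm f g μ)
    (hf0 : μ[f | m] =ᵐ[μ] 0) :
    ∫ ω, f ω * g ω ∂μ = 0 := by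
  have hcond : μ[f * g | m] =ᵐ[μ] 0 := by
    filter_upwards [condExp_ae_eq_integral_condExpKernel hm (hf2.integrable_mul hg2),
      (condExp_ae_eq_integral_condExpKernel hm (hf2.integrable one_le_two)).symm.trans hf0,
      hfg.ae_indepFun_condExpKernel hf hg] with ω hfgω hfω hindep
    rw [hfgω, Pi.mul_def, hindep.integral_fun_mul_eq_mul_integral hf.aestronglyMeasurable
      hg.aestronglyMeasurable, hfω, Pi.zero_apply, zero_mul]
  calc ∫ ω, f ω * g ω ∂μ = ∫ ω, μ[f * g | m] ω ∂μ := (integral_condExp hm).symm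
    _ = 0 := by simp [integral_congr_ae hcond]

lemma ProbabilityTheory.CondIndepFun.integral_apply_mul_apply_eq_zero {ι : Type*} [Fintype ι]
    {v w : Ω → EuclideanSpace ℝ ι} (hv : Measurable v) (hw : Measurable w)
    (hv2 : MemLp v 2 μ) (hw2 : MemLp w 2 μ) (hvw : CondIndepFun m hm v w μ)
    (hv0 : μ[v | m] =ᵐ[μ] 0) (i j : ι) :
    ∫ ω, v ω i * w ω j ∂μ = 0 := by
  let π : ι → EuclideanSpace ℝ ι →L[ℝ] ℝ := fun k => EuclideanSpace.proj k
  refine CondIndepFun.integral_mul_eq_zero ((π i).measurable.comp hv) ((π j).measurable.comp hw)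
    (hv2.euclideanSpace_apply i) (hw2.euclideanSpace_apply j)
    (hvw.comp (π i).measurable (π j).measurable) ?_
  filter_upwards [((π i).comp_condExp_comm (m := m) (hv2.integrable one_le_two)).symm, hv0]
    with ω h h0
  rw [Function.comp_apply, h0, Pi.zero_apply, map_zero] at h
  exact h

lemma ProbabilityTheory.CondIndepFun.integral_add_smul_mul_sub_inv_smul_eq_zero {ι : Type*}
    [Fintype ι] {n z : Ω → EuclideanSpace ℝ ι} (hn : Measurable n) (hz : Measurable z)
    (hn2 : MemLp n 2 μ) (hz2 : MemLp z 2 μ) (hnz : CondIndepFun m hm n z μ)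
    (hn0 : μ[n | m] =ᵐ[μ] 0) (hz0 : μ[z | m] =ᵐ[μ] 0)
    (hcov : ∀ i j, μ[fun ω => n ω i * n ω j | m] =ᵐ[μ] μ[fun ω => z ω i * z ω j | m])
    {α : ℝ} (hα : α ≠ 0) (i j : ι) :
    ∫ ω, (n ω + α • z ω) i * (n ω - α⁻¹ • z ω) j ∂μ = 0 := by
  simp only [PiLp.add_apply, PiLp.sub_apply, PiLp.smul_apply, smul_eq_mul]
  refine integral_add_mul_mul_sub_inv_mul_eq_zero (hn2.euclideanSpace_apply i)
    (hn2.euclideanSpace_apply j) (hz2.euclideanSpace_apply i) (hz2.euclideanSpace_apply j) hα ?_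
    (hnz.integral_apply_mul_apply_eq_zero hn hz hn2 hz2 hn0 i j)
    (hnz.symm.integral_apply_mul_apply_eq_zero hz hn hz2 hn2 hz0 i j)
  rw [← integral_condExp hm, integral_congr_ae (hcov i j), integral_condExp hm]

end CondIndep

section Denoisers

variable {Ω : Type*} [MeasurableSpace Ω] {μ : Measure Ω} {m : ℕ}
  {x nhat : Ω → EuclideanSpace ℝ (Fin m)} {ε : ℝ}

lemma mem_partiallyLinearDenoisers_of_ae_eq_add
    {Q : EuclideanSpace ℝ (Fin m) → EuclideanSpace ℝ (Fin m)} (hQ : Measurable Q)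
    {e : Ω → EuclideanSpace ℝ (Fin m)} (he : MemLp e 2 μ) (heε : ∫ ω, ‖e ω‖ ^ 2 ∂μ ≤ ε ^ 2)
    (hQe : ∀ᵐ ω ∂μ, Q (x ω + nhat ω) = x ω + e ω) :
    Q ∈ PartiallyLinearDenoisers μ x nhat ε :=
  ⟨hQ, id, 0, e, measurable_id, he, by simpa using hQe, heε⟩

lemma integral_norm_sub_sq_le_of_surrogate_min [IsFiniteMeasure μ]
    {x₀ : EuclideanSpace ℝ (Fin m)} (hx₀ : ∀ᵐ ω ∂μ, x ω = x₀) (hnhat : MemLp nhat 2 μ)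
    {w : Ω → EuclideanSpace ℝ (Fin m)} (hw : MemLp w 2 μ) (hw0 : ∫ ω, w ω ∂μ = 0)
    (hnw : ∀ i j, ∫ ω, nhat ω i * w ω j ∂μ = 0)
    {R : EuclideanSpace ℝ (Fin m) → EuclideanSpace ℝ (Fin m)} {δ : ℝ}
    (hR : R ∈ PartiallyLinearDenoisers μ x nhat ε)
    (hR2 : MemLp (fun ω => R (x ω + nhat ω)) 2 μ)
    (hRmin : ∀ Q ∈ PartiallyLinearDenoisers μ x nhat ε,
      ∫ ω, ‖R (x ω + nhat ω) - (x ω + w ω)‖ ^ 2 ∂μ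
        ≤ ∫ ω, ‖Q (x ω + nhat ω) - (x ω + w ω)‖ ^ 2 ∂μ + δ) :
    ∫ ω, ‖R (x ω + nhat ω) - x ω‖ ^ 2 ∂μ ≤ ε ^ 2 + δ := by
  obtain ⟨hRmeas, g, L, e, -, he, hRe, heε⟩ := hR
  have hx : MemLp x 2 μ := (memLp_const x₀).ae_eq (hx₀.mono fun ω h => h.symm)
  -- `q` keeps the residual `e` of `R` and drops its partially linear part, to which `w` is
  -- orthogonal; comparing the surrogate losses of `R` and `q` therefore isolates the MSE of `R`.
  let q v := x₀ + (R v - g x₀ - L x₀ (v - x₀))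
  have hqe : ∀ᵐ ω ∂μ, q (x ω + nhat ω) = x ω + e ω := by
    filter_upwards [hx₀, hRe] with ω hω hRω
    simp only [q]
    rw [hRω, hω, add_sub_cancel_left]
    abel
  have hq : q ∈ PartiallyLinearDenoisers μ x nhat ε :=
    mem_partiallyLinearDenoisers_of_ae_eq_add (by fun_prop) he heε hqe
  have hRq : ∀ᵐ ω ∂μ, R (x ω + nhat ω) - x ω - e ω = (g x₀ - x₀) + L x₀ (nhat ω) := by
    filter_upwards [hx₀, hRe] with ω hω hRω
    rw [hRω, hω]
    abel
  have horth : ∫ ω, ⟪R (x ω + nhat ω) - x ω - e ω, w ω⟫_ℝ ∂μ = 0 := by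
    have hwint := hw.integrable one_le_two
    rw [integral_congr_ae (hRq.mono fun ω h => by rw [h])]
    simp_rw [inner_add_left]
    have hLw : Integrable (fun ω => ⟪L x₀ (nhat ω), w ω⟫_ℝ) μ :=
      ((L x₀).comp_memLp' hnhat).integrable_inner hw
    rw [integral_add (hwint.const_inner _) hLw,
      integral_inner hwint, hw0, inner_zero_right, zero_add,
      integral_inner_clm_apply_eq_zero hnhat hw hnw]
  have hqmse : ∫ ω, ‖q (x ω + nhat ω) - (x ω + w ω)‖ ^ 2 ∂μ = ∫ ω, ‖e ω - w ω‖ ^ 2 ∂μ :=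
    integral_congr_ae (hqe.mono fun ω h => by simp only [h, add_sub_add_left_eq_sub])
  have hmin := hRmin q hq
  rw [hqmse] at hmin
  simp_rw [← sub_sub] at hmin
  linarith [integral_norm_sq_le_of_integral_norm_sub_sq_le
    (f := fun ω => R (x ω + nhat ω) - x ω) (hR2.sub hx) he hw horth hmin]

end Denoisers

theorem stmt_12_general {Ω : Type*} [MeasurableSpace Ω] [StandardBorelSpace Ω]
    (μ : Measure Ω) [IsProbabilityMeasure μ]
    {m : ℕ} (x n z : Ω → EuclideanSpace ℝ (Fin m))
    (hx : Measurable x) (hn : Measurable n) (hz : Measurable z)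
    (hx2 : MemLp x 2 μ) (hn2 : MemLp n 2 μ) (hz2 : MemLp z 2 μ)
    (hncond : μ[n | MeasurableSpace.comap x inferInstance] =ᵐ[μ] 0)
    (hzcond : μ[z | MeasurableSpace.comap x inferInstance] =ᵐ[μ] 0)
    (hindep : CondIndepFun (MeasurableSpace.comap x inferInstance) hx.comap_le n z μ)
    (hcov : ∀ i j : Fin m,
      μ[fun ω => n ω i * n ω j | MeasurableSpace.comap x inferInstance]
        =ᵐ[μ] μ[fun ω => z ω i * z ω j | MeasurableSpace.comap x inferInstance])
    (α : ℝ) (hα : α ≠ 0)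
    (y nhat yhat : Ω → EuclideanSpace ℝ (Fin m))
    (hy : y = fun ω => x ω + n ω)
    (hnhat : nhat = fun ω => n ω + α • z ω)
    (hyhat : yhat = fun ω => x ω + nhat ω)
    (ε : ℝ) (δ : ℝ) (hδ : δ ∈ Set.Ioo (0 : ℝ) 1)
    (Rm Rh : EuclideanSpace ℝ (Fin m) → EuclideanSpace ℝ (Fin m))
    (hRh : Rh ∈ PartiallyLinearDenoisers μ x nhat ε)
    (hRm2 : MemLp (fun ω => Rm (yhat ω)) 2 μ)
    (hRh2 : MemLp (fun ω => Rh (yhat ω)) 2 μ)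
    (hRmmin : ∀ R ∈ PartiallyLinearDenoisers μ x nhat ε,
      ∫ ω, ‖Rm (yhat ω) - x ω‖ ^ 2 ∂μ ≤ (∫ ω, ‖R (yhat ω) - x ω‖ ^ 2 ∂μ) + δ)
    (hRhmin : ∀ R ∈ PartiallyLinearDenoisers μ x nhat ε,
      ∫ ω, ‖Rh (yhat ω) - (y ω - α⁻¹ • z ω)‖ ^ 2 ∂μ
        ≤ (∫ ω, ‖R (yhat ω) - (y ω - α⁻¹ • z ω)‖ ^ 2 ∂μ) + δ)
    (x₀ : EuclideanSpace ℝ (Fin m)) (hx₀ : ∀ᵐ ω ∂μ, x ω = x₀) :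
    ∫ ω, ‖Rm (yhat ω) - Rh (yhat ω)‖ ^ 2 ∂μ
      ≤ (ε ^ 2 + 2 * Real.sqrt δ) / (1 - Real.sqrt δ) := by
  subst hy hyhat
  have hw0 : ∫ ω, (n ω - α⁻¹ • z ω) ∂μ = 0 := by
    have hzint : Integrable (fun ω => α⁻¹ • z ω) μ := (hz2.integrable one_le_two).smul α⁻¹
    rw [integral_sub (hn2.integrable one_le_two) hzint, integral_smul,
      ← integral_condExp hx.comap_le, ← integral_condExp (f := z) hx.comap_le,
      integral_congr_ae hncond, integral_congr_ae hzcond]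
    simp
  have hnw : ∀ i j, ∫ ω, nhat ω i * (n ω - α⁻¹ • z ω) j ∂μ = 0 := fun i j => by
    rw [hnhat]
    exact hindep.integral_add_smul_mul_sub_inv_smul_eq_zero hn hz hn2 hz2 hncond hzcond hcov hα i j
  have hA : ∫ ω, ‖Rm (x ω + nhat ω) - x ω‖ ^ 2 ∂μ ≤ δ := by
    have hx₀mem : (fun _ => x₀) ∈ PartiallyLinearDenoisers μ x nhat ε :=
      mem_partiallyLinearDenoisers_of_ae_eq_add measurable_const (memLp_const 0)
        (by simpa using sq_nonneg ε) (hx₀.mono fun ω h => by simp [h])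
    have hx₀mse : ∫ ω, ‖x₀ - x ω‖ ^ 2 ∂μ = 0 :=
      integral_eq_zero_of_ae (hx₀.mono fun ω h => by simp [h])
    simpa [hx₀mse] using hRmmin _ hx₀mem
  have hB : ∫ ω, ‖Rh (x ω + nhat ω) - x ω‖ ^ 2 ∂μ ≤ ε ^ 2 + δ :=
    integral_norm_sub_sq_le_of_surrogate_min (w := fun ω => n ω - α⁻¹ • z ω) hx₀
      (hnhat ▸ hn2.add (hz2.const_smul α)) (hn2.sub (hz2.const_smul α⁻¹)) hw0 hnw hRh hRh2
      fun Q hQ => by simpa only [add_sub_assoc] using hRhmin Q hQ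
  calc ∫ ω, ‖Rm (x ω + nhat ω) - Rh (x ω + nhat ω)‖ ^ 2 ∂μ
      = ∫ ω, ‖(Rm (x ω + nhat ω) - x ω) - (Rh (x ω + nhat ω) - x ω)‖ ^ 2 ∂μ := by
        simp_rw [sub_sub_sub_cancel_right]
    _ ≤ (√δ + √(ε ^ 2 + δ)) ^ 2 :=
        integral_norm_sub_sq_le_sq_sqrt_add_sqrt (hRm2.sub hx2) (hRh2.sub hx2) hA hB
    _ ≤ (ε ^ 2 + 2 * √δ) / (1 - √δ) := sq_sqrt_add_sqrt_add_le hδ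

theorem stmt_12 {Ω : Type*} [MeasurableSpace Ω] [StandardBorelSpace Ω]
    (μ : Measure Ω) [IsProbabilityMeasure μ]
    {m : ℕ} (x n z : Ω → EuclideanSpace ℝ (Fin m))
    (hx : Measurable x) (hn : Measurable n) (hz : Measurable z)
    (hx2 : MemLp x 2 μ) (hn2 : MemLp n 2 μ) (hz2 : MemLp z 2 μ)
    (hncond : μ[n | MeasurableSpace.comap x inferInstance] =ᵐ[μ] 0)
    (hzcond : μ[z | MeasurableSpace.comap x inferInstance] =ᵐ[μ] 0)
    (hindep : CondIndepFun (MeasurableSpace.comap x inferInstance) hx.comap_le n z μ)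
    (hcov : ∀ i j : Fin m,
      μ[fun ω => n ω i * n ω j | MeasurableSpace.comap x inferInstance]
        =ᵐ[μ] μ[fun ω => z ω i * z ω j | MeasurableSpace.comap x inferInstance])
    (α : ℝ) (hα : α ≠ 0)
    (y nhat yhat : Ω → EuclideanSpace ℝ (Fin m))
    (hy : y = fun ω => x ω + n ω)
    (hnhat : nhat = fun ω => n ω + α • z ω)
    (hyhat : yhat = fun ω => x ω + nhat ω)
    (ε : ℝ) (hε : 0 < ε) (δ : ℝ) (hδ : δ ∈ Set.Ioo (0 : ℝ) 1)
    (Rm Rh : EuclideanSpace ℝ (Fin m) → EuclideanSpace ℝ (Fin m))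
    (hRm : Rm ∈ PartiallyLinearDenoisers μ x nhat ε)
    (hRh : Rh ∈ PartiallyLinearDenoisers μ x nhat ε)
    (hRm2 : MemLp (fun ω => Rm (yhat ω)) 2 μ)
    (hRh2 : MemLp (fun ω => Rh (yhat ω)) 2 μ)
    (hRmmin : ∀ R ∈ PartiallyLinearDenoisers μ x nhat ε,
      ∫ ω, ‖Rm (yhat ω) - x ω‖ ^ 2 ∂μ ≤ (∫ ω, ‖R (yhat ω) - x ω‖ ^ 2 ∂μ) + δ)
    (hRhmin : ∀ R ∈ PartiallyLinearDenoisers μ x nhat ε,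
      ∫ ω, ‖Rh (yhat ω) - (y ω - α⁻¹ • z ω)‖ ^ 2 ∂μ
        ≤ (∫ ω, ‖R (yhat ω) - (y ω - α⁻¹ • z ω)‖ ^ 2 ∂μ) + δ)
    (x₀ : EuclideanSpace ℝ (Fin m)) (hx₀ : ∀ᵐ ω ∂μ, x ω = x₀) :
    ∫ ω, ‖Rm (yhat ω) - Rh (yhat ω)‖ ^ 2 ∂μ
      ≤ (ε ^ 2 + 2 * Real.sqrt δ) / (1 - Real.sqrt δ) :=
  stmt_12_general μ x n z hx hn hz hx2 hn2 hz2 hncond hzcond hindep hcov α hα y nhat yhat hy hnhat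
    hyhat ε δ hδ Rm Rh hRh hRm2 hRh2 hRmmin hRhmin x₀ hx₀
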